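/- Let A ∈ ℝ^{I1×I2×I3} be a third-order real tensor and let r1, r2 be positive integers. There exist vectors x_{i2} ∈ ℝ^{r1} for each i2 ∈ {1,…,I2}, matrices Y_{i3} ∈ ℝ^{r1×r2} for each i3 ∈ {1,…,I3}, and vectors z_{i1} ∈ ℝ^{r2} for each i1 ∈ {1,…,I1} such that A(i1,i2,i3) = x_{i2}ᵀ Y_{i3} z_{i1} = ∑_{p=1}^{r1} ∑_{q=1}^{r2} x_{i2}(p) · Y_{i3}(p,q) · z_{i1}(q) for all indices (i1,i2,i3) if and only if rank(A_{(2)}) ≤ r1 and rank(A_{(1)}) ≤ r2. -/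

import Mathlib

/-!
A matrix of rank at most `r` factors as `Z * (P * M)`: the `r` rows of `P * M` span its row
space. Applied to the mode-1 unfolding, this writes `A = W ×₁ Z` with `W = A ×₁ P` a tensor of
`r₂` slices that are combinations of slices of `A`; hence the mode-2 unfolding of `W` is that of
`A` times a matrix, and its rank is still at most `r₁`. Factoring it through `Fin r₁` gives the
vectors `x_{i₂}` and the cores `Y_{i₃}`. Conversely, a factorization exhibits both unfoldings as
products through `Fin r₁` and `Fin r₂`.
-/

open Matrix Finset Module
open scoped Kronecker

theorem Submodule.exists_fin_span_range_eq {K V : Type*} [DivisionRing K] [AddCommGroup V]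
    [Module K V] (S : Submodule K V) [FiniteDimensional K S] {r : ℕ} (h : finrank K S ≤ r) :
    ∃ g : Fin r → V, span K (Set.range g) = S := by
  let b := Module.finBasis K S
  let g := Function.extend (Fin.castLE h) (S.subtype ∘ b) 0
  refine ⟨g, le_antisymm ?_ ?_⟩
  · refine span_le.2 ((Set.range_extend_subset _ _ _).trans ?_)
    rintro _ (⟨k, rfl⟩ | ⟨k, -, rfl⟩)
    exacts [(b k).2, S.zero_mem]
  · have hb : Set.range (S.subtype ∘ b) ⊆ Set.range g := by
      rintro _ ⟨k, rfl⟩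
      exact ⟨Fin.castLE h k, (Fin.castLE_injective h).extend_apply _ _ k⟩
    calc S = span K (Set.range (S.subtype ∘ b)) := by
          rw [Set.range_comp, span_image, b.span_eq, map_subtype_top]
      _ ≤ span K (Set.range g) := span_mono hb

namespace Matrix

variable {m n K : Type*} [Fintype m] [Fintype n] [Field K]

theorem exists_mul_mul_eq_self_of_rank_le (M : Matrix m n K) {r : ℕ} (h : M.rank ≤ r) :
    ∃ (Z : Matrix m (Fin r) K) (P : Matrix (Fin r) m K), Z * (P * M) = M := by
  rw [rank_eq_finrank_span_row] at h
  obtain ⟨g, hg⟩ := Submodule.exists_fin_span_range_eq _ h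
  have hP : ∀ k, ∃ c : m → K, ∑ i, c i • M.row i = g k := fun k =>
    (Submodule.mem_span_range_iff_exists_fun K).1 (hg ▸ Submodule.subset_span ⟨k, rfl⟩)
  have hZ : ∀ i, ∃ c : Fin r → K, ∑ k, c k • g k = M.row i := fun i =>
    (Submodule.mem_span_range_iff_exists_fun K).1 (hg.symm ▸ Submodule.subset_span ⟨i, rfl⟩)
  choose P hP using hP
  choose Z hZ using hZ
  have hPM : of P * M = of g := by
    ext k j
    simp [mul_apply, ← hP k, Finset.sum_apply, mul_comm]
  refine ⟨of Z, of P, ?_⟩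
  ext i j
  rw [hPM, ← row_apply M i j, ← hZ i]
  simp [mul_apply]

theorem rank_le_iff_exists_eq_mul (M : Matrix m n K) {r : ℕ} :
    M.rank ≤ r ↔ ∃ (B : Matrix m (Fin r) K) (C : Matrix (Fin r) n K), M = B * C := by
  constructor
  · intro h
    obtain ⟨Z, P, hZP⟩ := M.exists_mul_mul_eq_self_of_rank_le h
    exact ⟨Z, P * M, hZP.symm⟩
  · rintro ⟨B, C, rfl⟩
    simpa using (rank_mul_le_left B C).trans B.rank_le_card_width

end Matrix

section Unfolding

variable {ι₁ ι₂ ι₃ κ K : Type*}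

def mode1Unfolding (A : ι₁ → ι₂ → ι₃ → K) : Matrix ι₁ (ι₂ × ι₃) K :=
  of fun i jk => A i jk.1 jk.2

def mode2Unfolding (A : ι₁ → ι₂ → ι₃ → K) : Matrix ι₂ (ι₁ × ι₃) K :=
  of fun j ik => A ik.1 j ik.2

/-- The mode-1 product `A ×₁ P`. -/
def mode1Product [Fintype ι₁] [CommSemiring K] (P : Matrix κ ι₁ K) (A : ι₁ → ι₂ → ι₃ → K) :
    κ → ι₂ → ι₃ → K :=
  fun q j k => ∑ i, P q i * A i j k

theorem mode1Unfolding_injective :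
    Function.Injective (mode1Unfolding : (ι₁ → ι₂ → ι₃ → K) → Matrix ι₁ (ι₂ × ι₃) K) :=
  fun _ _ h => funext₃ fun i j k => congrFun₂ h i (j, k)

theorem mode1Unfolding_mode1Product [Fintype ι₁] [CommSemiring K] (P : Matrix κ ι₁ K)
    (A : ι₁ → ι₂ → ι₃ → K) : mode1Unfolding (mode1Product P A) = P * mode1Unfolding A := by
  ext q ⟨j, k⟩
  simp [mode1Unfolding, mode1Product, mul_apply]

theorem mode2Unfolding_mode1Product [Fintype ι₁] [Fintype ι₃] [DecidableEq ι₃] [CommSemiring K]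
    (P : Matrix κ ι₁ K) (A : ι₁ → ι₂ → ι₃ → K) :
    mode2Unfolding (mode1Product P A) = mode2Unfolding A * (Pᵀ ⊗ₖ (1 : Matrix ι₃ ι₃ K)) := by
  ext j ⟨q, k⟩
  simp [mode2Unfolding, mode1Product, mul_apply, Fintype.sum_prod_type, one_apply, mul_comm]

theorem exists_eq_mode1Product_rank_mode2Unfolding_le [Fintype ι₁] [Fintype ι₂] [Fintype ι₃]
    [DecidableEq ι₃] [Field K] (A : ι₁ → ι₂ → ι₃ → K) {r : ℕ}
    (h : (mode1Unfolding A).rank ≤ r) :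
    ∃ (Z : Matrix ι₁ (Fin r) K) (W : Fin r → ι₂ → ι₃ → K),
      A = mode1Product Z W ∧ (mode2Unfolding W).rank ≤ (mode2Unfolding A).rank := by
  obtain ⟨Z, P, hZP⟩ := (mode1Unfolding A).exists_mul_mul_eq_self_of_rank_le h
  refine ⟨Z, mode1Product P A, mode1Unfolding_injective ?_, ?_⟩
  · rw [mode1Unfolding_mode1Product, mode1Unfolding_mode1Product, hZP]
  · rw [mode2Unfolding_mode1Product]
    exact rank_mul_le_left _ _

end Unfolding

theorem mode3_TT_factorization_iff_rank_general {I1 I2 I3 r1 r2 : ℕ}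
    (A : Fin I1 → Fin I2 → Fin I3 → ℝ) :
    (∃ (x : Fin I2 → Fin r1 → ℝ) (Y : Fin I3 → Matrix (Fin r1) (Fin r2) ℝ)
        (z : Fin I1 → Fin r2 → ℝ),
        ∀ i1 i2 i3, A i1 i2 i3 = ∑ p, ∑ q, x i2 p * Y i3 p q * z i1 q) ↔
      (Matrix.rank (Matrix.of fun (i2 : Fin I2) (jk : Fin I1 × Fin I3) => A jk.1 i2 jk.2) ≤ r1 ∧
       Matrix.rank (Matrix.of fun (i1 : Fin I1) (jk : Fin I2 × Fin I3) => A i1 jk.1 jk.2) ≤ r2) := by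
  change _ ↔ (mode2Unfolding A).rank ≤ r1 ∧ (mode1Unfolding A).rank ≤ r2
  constructor
  · rintro ⟨x, Y, z, hA⟩
    refine ⟨(rank_le_iff_exists_eq_mul _).2 ⟨of x, of fun p ik => ∑ q, Y ik.2 p q * z ik.1 q, ?_⟩,
      (rank_le_iff_exists_eq_mul _).2 ⟨of z, of fun q jk => ∑ p, x jk.1 p * Y jk.2 p q, ?_⟩⟩ <;>
      ext
    · simp [mode2Unfolding, mul_apply, hA, mul_sum, mul_assoc]
    · simp [mode1Unfolding, mul_apply, hA, mul_sum, mul_comm, mul_left_comm]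
      exact sum_comm
  · rintro ⟨h2, h1⟩
    obtain ⟨Z, W, rfl, hW⟩ := exists_eq_mode1Product_rank_mode2Unfolding_le A h1
    obtain ⟨X, C, hXC⟩ := (rank_le_iff_exists_eq_mul _).1 (hW.trans h2)
    refine ⟨X, fun k p q => C p (q, k), Z, fun i j k => ?_⟩
    have hW : ∀ q, W q j k = ∑ p, X j p * C p (q, k) := fun q => congrFun₂ hXC j (q, k)
    simp only [mode1Product, hW, mul_sum]
    rw [sum_comm]
    exact sum_congr rfl fun p _ => sum_congr rfl fun q _ => by ring

/-- A third-order tensor `A ∈ ℝ^{I1×I2×I3}` admits a mode-3 tensor train factorization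
`A(i1,i2,i3) = ∑_{p,q} x_{i2}(p) · Y_{i3}(p,q) · z_{i1}(q)` with ranks `(r1, r2)` if and only
if the mode-2 unfolding has rank at most `r1` and the mode-1 unfolding has rank at most `r2`. -/
theorem mode3_TT_factorization_iff_rank {I1 I2 I3 r1 r2 : ℕ}
    (hr1 : 0 < r1) (hr2 : 0 < r2)
    (A : Fin I1 → Fin I2 → Fin I3 → ℝ) :
    (∃ (x : Fin I2 → Fin r1 → ℝ) (Y : Fin I3 → Matrix (Fin r1) (Fin r2) ℝ)
        (z : Fin I1 → Fin r2 → ℝ),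
        ∀ i1 i2 i3, A i1 i2 i3 = ∑ p, ∑ q, x i2 p * Y i3 p q * z i1 q) ↔
      (Matrix.rank (Matrix.of fun (i2 : Fin I2) (jk : Fin I1 × Fin I3) => A jk.1 i2 jk.2) ≤ r1 ∧
       Matrix.rank (Matrix.of fun (i1 : Fin I1) (jk : Fin I2 × Fin I3) => A i1 jk.1 jk.2) ≤ r2) :=
  mode3_TT_factorization_iff_rank_general A
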